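/- Let Q be an acyclic quiver and V a rigid representation. If M is a representation with ⟨dim V, dim M⟩ = 0 and ⟨dim V, dim M'⟩ ≤ 0 for every subrepresentation M' ⊆ M, then Hom(V,M) = 0 = Ext^1(V,M). -/

import Mathlib

open Matrix BigOperators

/-- A finite quiver: `n` vertices, `a` arrows with source and target maps. -/
structure FinQuiver where
  n : ℕ
  a : ℕ
  src : Fin a → Fin n
  tgt : Fin a → Fin n

namespace FinQuiver

/-- A finite quiver is acyclic iff it admits a topological ordering of vertices. -/
def Acyclic (Q : FinQuiver) : Prop :=
  ∃ h : Fin Q.n → ℕ, ∀ x, h (Q.src x) < h (Q.tgt x)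

/-- Connectivity of the underlying graph. -/
def Connected (Q : FinQuiver) : Prop :=
  ∀ S : Finset (Fin Q.n), S.Nonempty → S ≠ Finset.univ →
    ∃ x, (Q.src x ∈ S ∧ Q.tgt x ∉ S) ∨ (Q.tgt x ∈ S ∧ Q.src x ∉ S)

/-- The Euler form ⟨d,e⟩ = Σ_i d_i e_i − Σ_{α : i → j} d_i e_j. -/
def euler (Q : FinQuiver) (d e : Fin Q.n → ℤ) : ℤ :=
  (∑ i, d i * e i) - ∑ x, d (Q.src x) * e (Q.tgt x)

/-- A (possibly disconnected) Dynkin quiver: acyclic with positive definite Tits form. -/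
def IsDynkin (Q : FinQuiver) : Prop :=
  Q.Acyclic ∧ ∀ d : Fin Q.n → ℤ, d ≠ 0 → 0 < Q.euler d d

/-- `δ` is the null root: positive, isotropic, and every isotropic vector is an
integer multiple of `δ`. -/
def IsNullRoot (Q : FinQuiver) (δ : Fin Q.n → ℤ) : Prop :=
  (∀ i, 0 < δ i) ∧ Q.euler δ δ = 0 ∧
    ∀ d : Fin Q.n → ℤ, Q.euler d d = 0 → ∃ m : ℤ, d = m • δ

/-- A Euclidean (affine) quiver: connected, acyclic, positive semidefinite Tits form
with a null root. -/
def IsEuclidean (Q : FinQuiver) : Prop :=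
  Q.Acyclic ∧ Q.Connected ∧ (∀ d, 0 ≤ Q.euler d d) ∧ ∃ δ, Q.IsNullRoot δ

end FinQuiver

/-- A finite-dimensional representation of `Q` over `k`: dimensions at each vertex,
and a matrix for each arrow. -/
structure QRep (k : Type) [Field k] (Q : FinQuiver) where
  d : Fin Q.n → ℕ
  mat : ∀ x : Fin Q.a, Matrix (Fin (d (Q.tgt x))) (Fin (d (Q.src x))) k

namespace QRep

variable {k : Type} [Field k] {Q : FinQuiver}

/-- The dimension vector of a representation, as an integer vector. -/
def dimVec (M : QRep k Q) : Fin Q.n → ℤ := fun i => (M.d i : ℤ)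

/-- The space of morphisms of representations `M → N`. -/
def homSpace (M N : QRep k Q) :
    Submodule k (∀ i, Matrix (Fin (N.d i)) (Fin (M.d i)) k) where
  carrier := {f | ∀ x, f (Q.tgt x) * M.mat x = N.mat x * f (Q.src x)}
  add_mem' := by
    intro f g hf hg x
    simp only [Pi.add_apply, Matrix.add_mul, Matrix.mul_add, hf x, hg x]
  zero_mem' := by intro x; simp
  smul_mem' := by
    intro c f hf x
    simp only [Pi.smul_apply, Matrix.smul_mul, Matrix.mul_smul, hf x]

/-- The standard map whose kernel is `Hom(M,N)` and cokernel is `Ext¹(M,N)`. -/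
def extMap (M N : QRep k Q) :
    (∀ i, Matrix (Fin (N.d i)) (Fin (M.d i)) k) →ₗ[k]
    (∀ x : Fin Q.a, Matrix (Fin (N.d (Q.tgt x))) (Fin (M.d (Q.src x))) k) where
  toFun f := fun x => f (Q.tgt x) * M.mat x - N.mat x * f (Q.src x)
  map_add' := by
    intro f g; funext x
    simp only [Pi.add_apply, Matrix.add_mul, Matrix.mul_add]
    abel
  map_smul' := by
    intro c f; funext x
    simp only [Pi.smul_apply, Matrix.smul_mul, Matrix.mul_smul, RingHom.id_apply,
      smul_sub]

/-- dim_k Hom(M,N). -/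
noncomputable def homDim (M N : QRep k Q) : ℕ :=
  Module.finrank k (homSpace M N)

/-- dim_k Ext¹(M,N), defined as the dimension of the cokernel of `extMap`. -/
noncomputable def extDim (M N : QRep k Q) : ℕ :=
  Module.finrank k
    ((∀ x : Fin Q.a, Matrix (Fin (N.d (Q.tgt x))) (Fin (M.d (Q.src x))) k) ⧸
      LinearMap.range (extMap M N))

/-- Isomorphism of representations. -/
def IsoRep (M N : QRep k Q) : Prop :=
  ∃ f ∈ homSpace M N, ∀ i, Function.Bijective (Matrix.mulVecLin (f i))

/-- `L` is (the source of a monomorphism into) a subrepresentation of `M`. -/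
def IsSubrep (L M : QRep k Q) : Prop :=
  ∃ f ∈ homSpace L M, ∀ i, Function.Injective (Matrix.mulVecLin (f i))

/-- `L` is a direct summand of `M` (split monomorphism with retraction). -/
def IsSummand (L M : QRep k Q) : Prop :=
  ∃ f ∈ homSpace L M, ∃ g ∈ homSpace M L, ∀ i, g i * f i = 1

/-- `M` is indecomposable: nonzero, and its endomorphism ring has no nontrivial
idempotents. -/
def Indec (M : QRep k Q) : Prop :=
  (∃ i, M.d i ≠ 0) ∧
    ∀ f ∈ homSpace M M, (∀ i, f i * f i = f i) → f = 0 ∨ f = 1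

/-- An exceptional representation: indecomposable and rigid. -/
def Exceptional (M : QRep k Q) : Prop :=
  Indec M ∧ extDim M M = 0

/-- `(f, g)` form a short exact sequence `0 → A → B → C → 0` of representations. -/
def IsSES (A B C : QRep k Q)
    (f : ∀ i, Matrix (Fin (B.d i)) (Fin (A.d i)) k)
    (g : ∀ i, Matrix (Fin (C.d i)) (Fin (B.d i)) k) : Prop :=
  f ∈ homSpace A B ∧ g ∈ homSpace B C ∧
    ∀ i, Function.Injective (Matrix.mulVecLin (f i)) ∧
      Function.Surjective (Matrix.mulVecLin (g i)) ∧
      LinearMap.range (Matrix.mulVecLin (f i)) = LinearMap.ker (Matrix.mulVecLin (g i))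

/-- A thick (= abelian and extension-closed, since rep(Q) is hereditary) full
subcategory: closed under isomorphism, direct summands and two-out-of-three for
short exact sequences. -/
def Thick (P : QRep k Q → Prop) : Prop :=
  (∀ M N, IsoRep M N → P M → P N) ∧
  (∀ L M, IsSummand L M → P M → P L) ∧
  (∀ A B C f g, IsSES A B C f g →
    ((P A → P B → P C) ∧ (P A → P C → P B) ∧ (P B → P C → P A)))

/-- `P` is the smallest thick subcategory containing `S`. -/
def GeneratedBy (P : QRep k Q → Prop) (S : Set (QRep k Q)) : Prop :=
  Thick P ∧ (∀ X ∈ S, P X) ∧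
    ∀ P' : QRep k Q → Prop, Thick P' → (∀ X ∈ S, P' X) → ∀ M, P M → P' M

/-- An exceptional sequence. -/
def ExcSeq {r : ℕ} (E : Fin r → QRep k Q) : Prop :=
  (∀ i, Exceptional (E i) ∧ homDim (E i) (E i) = 1) ∧
    ∀ i j : Fin r, i < j → homDim (E i) (E j) = 0 ∧ extDim (E i) (E j) = 0

/-- King's criterion for `⟨d,−⟩`-semi-stability. -/
def SemiStable (d : Fin Q.n → ℤ) (M : QRep k Q) : Prop :=
  Q.euler d M.dimVec = 0 ∧ ∀ L : QRep k Q, IsSubrep L M → Q.euler d L.dimVec ≤ 0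

/-- `M` is regular: every indecomposable summand pairs to zero with the null root. -/
def RegularRep (δ : Fin Q.n → ℤ) (M : QRep k Q) : Prop :=
  ∀ L, IsSummand L M → Indec L → Q.euler δ L.dimVec = 0

/-- `M` is in the right perpendicular category of `V`. -/
def RPerp (V M : QRep k Q) : Prop := homDim V M = 0 ∧ extDim V M = 0

/-- `M` is in the left perpendicular category of `V`. -/
def LPerp (V M : QRep k Q) : Prop := homDim M V = 0 ∧ extDim M V = 0

/-- `P` is a projective representation (Ext¹(P,−) = 0). -/
def IsProjRep (P : QRep k Q) : Prop := ∀ M : QRep k Q, extDim P M = 0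

end QRep

/-- `α` is a Schur root: the dimension vector of an indecomposable representation
with trivial endomorphism ring. -/
def IsSchurRoot (k : Type) [Field k] (Q : FinQuiver) (α : Fin Q.n → ℤ) : Prop :=
  ∃ M : QRep k Q, M.dimVec = α ∧ QRep.Indec M ∧ QRep.homDim M M = 1

/-- `ext(α,β) = 0`: some representations of these dimension vectors have no
extensions. -/
def ExtZero (k : Type) [Field k] (Q : FinQuiver) (α β : Fin Q.n → ℤ) : Prop :=
  ∃ M N : QRep k Q, M.dimVec = α ∧ N.dimVec = β ∧ QRep.extDim M N = 0

/-- Kac's characterization of the canonical decomposition: `c` is the canonical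
decomposition of `d` iff the entries sum to `d`, are Schur roots, and are pairwise
ext-orthogonal. -/
def IsCanonDecomp (k : Type) [Field k] (Q : FinQuiver) (d : Fin Q.n → ℤ)
    (c : List (Fin Q.n → ℤ)) : Prop :=
  c.sum = d ∧ (∀ α ∈ c, IsSchurRoot k Q α) ∧
    ∀ i j : Fin c.length, i ≠ j → ExtZero k Q (c.get i) (c.get j)

/-!
If `Hom(V, M) ≠ 0`, the image `M'` of a nonzero map `V → M` is a subrepresentation of `M` and a
quotient of `V`. Since `Ext¹(V, -)` is right exact and `V` is rigid, `Ext¹(V, M') = 0`, so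
`⟨dim V, dim M'⟩ = dim Hom(V, M') > 0`, against the hypothesis on subrepresentations. Hence
`Hom(V, M) = 0`, and then `dim Ext¹(V, M) = -⟨dim V, dim M⟩ = 0`.
-/

namespace Matrix

variable {R l m n : Type*}

lemma exists_mul_eq_one_of_surjective [CommRing R] [Fintype m] [DecidableEq m] [Fintype n]
    [DecidableEq n] (A : Matrix m n R) (hA : Function.Surjective A.mulVecLin) :
    ∃ B : Matrix n m R, A * B = 1 := by
  obtain ⟨s, hs⟩ := A.mulVecLin.exists_rightInverse_of_surjective (LinearMap.range_eq_top.2 hA)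
  refine ⟨LinearMap.toMatrix' s, toLin'.injective ?_⟩
  rw [toLin'_mul, toLin'_toMatrix', toLin'_apply', hs, toLin'_one]

lemma mul_left_cancel_of_injective [CommSemiring R] [Fintype m] [DecidableEq m] [Fintype n]
    [DecidableEq n] {A : Matrix l m R} (hA : Function.Injective A.mulVecLin) {B C : Matrix m n R}
    (h : A * B = A * C) : B = C := by
  apply toLin'.injective
  refine LinearMap.ext fun v => hA ?_
  have hv := LinearMap.congr_fun (congrArg toLin' h) v
  rw [toLin'_mul_apply, toLin'_mul_apply] at hv
  exact hv

end Matrix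

namespace QRep

variable {k : Type} [Field k] {Q : FinQuiver}

lemma mem_homSpace_iff {M N : QRep k Q} (f : ∀ i, Matrix (Fin (N.d i)) (Fin (M.d i)) k) :
    f ∈ homSpace M N ↔ ∀ x, f (Q.tgt x) * M.mat x = N.mat x * f (Q.src x) :=
  Iff.rfl

lemma extMap_apply (M N : QRep k Q) (f : ∀ i, Matrix (Fin (N.d i)) (Fin (M.d i)) k)
    (x : Fin Q.a) : extMap M N f x = f (Q.tgt x) * M.mat x - N.mat x * f (Q.src x) :=
  rfl

lemma homSpace_eq_ker_extMap (M N : QRep k Q) : homSpace M N = LinearMap.ker (extMap M N) := by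
  ext f
  simp only [mem_homSpace_iff, LinearMap.mem_ker, funext_iff, extMap_apply, Pi.zero_apply,
    sub_eq_zero]

lemma extDim_eq_zero_iff_surjective (M N : QRep k Q) :
    extDim M N = 0 ↔ Function.Surjective (extMap M N) := by
  rw [extDim, Module.finrank_zero_iff, Submodule.Quotient.subsingleton_iff,
    LinearMap.range_eq_top]

/-- Rank–nullity for `extMap`, whose source and target have dimensions the two sums in the
Euler form. -/
theorem euler_dimVec_eq_homDim_sub_extDim (M N : QRep k Q) :
    Q.euler M.dimVec N.dimVec = (homDim M N : ℤ) - extDim M N := by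
  have hsrc : Module.finrank k (LinearMap.range (extMap M N)) + homDim M N
      = ∑ i, M.d i * N.d i := by
    rw [homDim, homSpace_eq_ker_extMap, LinearMap.finrank_range_add_finrank_ker,
      Module.finrank_pi_fintype]
    simp [Module.finrank_matrix, mul_comm]
  have htgt : extDim M N + Module.finrank k (LinearMap.range (extMap M N))
      = ∑ x, M.d (Q.src x) * N.d (Q.tgt x) := by
    rw [extDim, Submodule.finrank_quotient_add_finrank, Module.finrank_pi_fintype]
    simp [Module.finrank_matrix, mul_comm]
  have hsrc' := congrArg (Nat.cast : ℕ → ℤ) hsrc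
  have htgt' := congrArg (Nat.cast : ℕ → ℤ) htgt
  push_cast at hsrc' htgt'
  simp only [FinQuiver.euler, dimVec]
  linarith

/-- Right exactness of `Ext¹(L, -)`: lift along a section of `π`, solve in `X`, push back. -/
theorem extDim_eq_zero_of_surjective {L X N : QRep k Q} (hL : extDim L X = 0)
    {π : ∀ i, Matrix (Fin (N.d i)) (Fin (X.d i)) k} (hπ : π ∈ homSpace X N)
    (hπ_surj : ∀ i, Function.Surjective (π i).mulVecLin) : extDim L N = 0 := by
  choose σ hσ using fun i => (π i).exists_mul_eq_one_of_surjective (hπ_surj i)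
  rw [extDim_eq_zero_iff_surjective] at hL ⊢
  intro z
  obtain ⟨g, hg⟩ := hL fun x => σ (Q.tgt x) * z x
  refine ⟨fun i => π i * g i, funext fun x => ?_⟩
  calc π (Q.tgt x) * g (Q.tgt x) * L.mat x - N.mat x * (π (Q.src x) * g (Q.src x))
      = π (Q.tgt x) * (g (Q.tgt x) * L.mat x - X.mat x * g (Q.src x)) := by
        rw [Matrix.mul_sub, ← Matrix.mul_assoc, ← Matrix.mul_assoc, ← Matrix.mul_assoc, hπ x]
    _ = z x := by
        rw [← extMap_apply, hg, ← Matrix.mul_assoc, hσ, Matrix.one_mul]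

lemma mem_homSpace_of_mul_mem {L M N : QRep k Q} {ι : ∀ i, Matrix (Fin (N.d i)) (Fin (M.d i)) k}
    (hι : ι ∈ homSpace M N) (hι_inj : ∀ i, Function.Injective (ι i).mulVecLin)
    {g : ∀ i, Matrix (Fin (M.d i)) (Fin (L.d i)) k} (hg : (fun i => ι i * g i) ∈ homSpace L N) :
    g ∈ homSpace L M := by
  intro x
  apply Matrix.mul_left_cancel_of_injective (hι_inj (Q.tgt x))
  have hgx : ι (Q.tgt x) * g (Q.tgt x) * L.mat x = N.mat x * (ι (Q.src x) * g (Q.src x)) :=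
    hg x
  rw [← Matrix.mul_assoc, hgx, ← Matrix.mul_assoc, ← hι x, Matrix.mul_assoc]

section Restrict

variable (M : QRep k Q) (W : ∀ i, Submodule k (Fin (M.d i) → k))
  (hW : ∀ x, ∀ v ∈ W (Q.src x), M.mat x *ᵥ v ∈ W (Q.tgt x))

/-- The subrepresentation of `M` on arrow-stable subspaces `W i`, in the coordinates of
`Module.finBasis`. -/
noncomputable abbrev restrict : QRep k Q where
  d i := Module.finrank k (W i)
  mat x := LinearMap.toMatrix' ((Module.finBasis k (W (Q.tgt x))).equivFun.toLinearMap ∘ₗ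
    (toLin' (M.mat x)).restrict (hW x) ∘ₗ
      (Module.finBasis k (W (Q.src x))).equivFun.symm.toLinearMap)

noncomputable def restrictIncl (i : Fin Q.n) :
    Matrix (Fin (M.d i)) (Fin ((M.restrict W hW).d i)) k :=
  LinearMap.toMatrix' ((W i).subtype ∘ₗ (Module.finBasis k (W i)).equivFun.symm.toLinearMap)

lemma restrictIncl_mem_homSpace : M.restrictIncl W hW ∈ homSpace (M.restrict W hW) M := by
  intro x
  refine toLin'.injective (LinearMap.ext fun v => ?_)
  simp only [restrictIncl, restrict, toLin'_apply, ← Matrix.mulVec_mulVec,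
    LinearMap.toMatrix'_mulVec, LinearMap.comp_apply, LinearEquiv.coe_coe,
    LinearEquiv.symm_apply_apply, Submodule.subtype_apply]
  rfl

lemma injective_restrictIncl (i : Fin Q.n) :
    Function.Injective (M.restrictIncl W hW i).mulVecLin := by
  rw [← toLin'_apply', restrictIncl, toLin'_toMatrix']
  exact (W i).injective_subtype.comp (Module.finBasis k (W i)).equivFun.symm.injective

lemma isSubrep_restrict : IsSubrep (M.restrict W hW) M :=
  ⟨_, M.restrictIncl_mem_homSpace W hW, M.injective_restrictIncl W hW⟩

variable {V : QRep k Q} (f : ∀ i, Matrix (Fin (M.d i)) (Fin (V.d i)) k)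
  (hf : ∀ i v, f i *ᵥ v ∈ W i)

noncomputable def restrictLift (i : Fin Q.n) :
    Matrix (Fin ((M.restrict W hW).d i)) (Fin (V.d i)) k :=
  LinearMap.toMatrix' ((Module.finBasis k (W i)).equivFun.toLinearMap ∘ₗ
    (toLin' (f i)).codRestrict (W i) (hf i))

lemma restrictIncl_mul_restrictLift (i : Fin Q.n) :
    M.restrictIncl W hW i * M.restrictLift W hW f hf i = f i := by
  refine toLin'.injective (LinearMap.ext fun v => ?_)
  simp only [restrictIncl, restrictLift, toLin'_apply, ← Matrix.mulVec_mulVec,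
    LinearMap.toMatrix'_mulVec, LinearMap.comp_apply, LinearEquiv.coe_coe,
    LinearEquiv.symm_apply_apply, Submodule.subtype_apply]
  rfl

lemma restrictLift_mem_homSpace (hfV : f ∈ homSpace V M) :
    M.restrictLift W hW f hf ∈ homSpace V (M.restrict W hW) := by
  refine mem_homSpace_of_mul_mem (M.restrictIncl_mem_homSpace W hW)
    (M.injective_restrictIncl W hW) ?_
  rwa [funext (M.restrictIncl_mul_restrictLift W hW f hf)]

lemma surjective_restrictLift (hWf : ∀ i, W i ≤ LinearMap.range (f i).mulVecLin) (i : Fin Q.n) :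
    Function.Surjective (M.restrictLift W hW f hf i).mulVecLin := by
  rw [← toLin'_apply', restrictLift, toLin'_toMatrix', LinearMap.coe_comp]
  refine (Module.finBasis k (W i)).equivFun.surjective.comp fun w => ?_
  obtain ⟨v, hv⟩ := hWf i w.2
  exact ⟨v, Subtype.ext hv⟩

end Restrict

theorem exists_isSubrep_surjective_of_ne_zero {V M : QRep k Q}
    {f : ∀ i, Matrix (Fin (M.d i)) (Fin (V.d i)) k} (hf : f ∈ homSpace V M) (hf0 : f ≠ 0) :
    ∃ M', IsSubrep M' M ∧ ∃ π ∈ homSpace V M', π ≠ 0 ∧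
      ∀ i, Function.Surjective (π i).mulVecLin := by
  let W i := LinearMap.range (f i).mulVecLin
  have hW : ∀ x, ∀ v ∈ W (Q.src x), M.mat x *ᵥ v ∈ W (Q.tgt x) := by
    rintro x _ ⟨u, rfl⟩
    exact ⟨V.mat x *ᵥ u, by simp only [Matrix.mulVecLin_apply, Matrix.mulVec_mulVec, hf x]⟩
  have hfW : ∀ i v, f i *ᵥ v ∈ W i := fun i v => ⟨v, rfl⟩
  refine ⟨M.restrict W hW, M.isSubrep_restrict W hW, M.restrictLift W hW f hfW,
    M.restrictLift_mem_homSpace W hW f hfW hf, fun hπ => hf0 (funext fun i => ?_),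
    M.surjective_restrictLift W hW f hfW fun i => le_rfl⟩
  rw [← M.restrictIncl_mul_restrictLift W hW f hfW i, hπ, Pi.zero_apply, Matrix.mul_zero,
    Pi.zero_apply]

theorem homDim_eq_zero_of_euler_subrep_nonpos {V M : QRep k Q} (hV : extDim V V = 0)
    (hM : ∀ L : QRep k Q, IsSubrep L M → Q.euler V.dimVec L.dimVec ≤ 0) :
    homDim V M = 0 := by
  rw [homDim, Submodule.finrank_eq_zero, Submodule.eq_bot_iff]
  by_contra! ⟨f, hf, hf0⟩
  obtain ⟨M', hM', π, hπ, hπ0, hπ_surj⟩ := exists_isSubrep_surjective_of_ne_zero hf hf0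
  have hext : extDim V M' = 0 := extDim_eq_zero_of_surjective hV hπ hπ_surj
  have hhom : 0 < homDim V M' :=
    Module.finrank_pos_iff_exists_ne_zero.2 ⟨⟨π, hπ⟩, Subtype.coe_ne_coe.1 hπ0⟩
  have hEuler := euler_dimVec_eq_homDim_sub_extDim V M'
  have hnonpos := hM M' hM'
  omega

end QRep

open QRep in
theorem king_implies_perp_general (k : Type) [Field k]
    (Q : FinQuiver) (V M : QRep k Q) (hV : extDim V V = 0)
    (h1 : Q.euler V.dimVec M.dimVec = 0)
    (h2 : ∀ L : QRep k Q, IsSubrep L M → Q.euler V.dimVec L.dimVec ≤ 0) :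
    homDim V M = 0 ∧ extDim V M = 0 := by
  have hom : homDim V M = 0 := homDim_eq_zero_of_euler_subrep_nonpos hV h2
  have hEuler := euler_dimVec_eq_homDim_sub_extDim V M
  exact ⟨hom, by omega⟩

open QRep in
/-- King's numerical criterion implies perpendicularity to a rigid
representation. -/
theorem king_implies_perp (k : Type) [Field k] [IsAlgClosed k]
    (Q : FinQuiver) (hQ : Q.Acyclic) (V M : QRep k Q) (hV : extDim V V = 0)
    (h1 : Q.euler V.dimVec M.dimVec = 0)
    (h2 : ∀ L : QRep k Q, IsSubrep L M → Q.euler V.dimVec L.dimVec ≤ 0) :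
    homDim V M = 0 ∧ extDim V M = 0 :=
  king_implies_perp_general k Q V M hV h1 h2
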